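/- arXiv:1205.5709 — 4 statements merged into one kernel-verified Lean document; each statement's English description precedes it below -/
import Mathlib

section
/- Let $(\hat\Theta_k)_{k\geq 0}$ be i.i.d. nonnegative integer-valued random variables, and let $(\Theta_k)_{k \geq 0}$ be (possibly dependent) nonnegative random variables with values in $\mathbb{N} \cup \{\infty\}$ such that for all $k$ and all $t_0,\dots,t_k \in \mathbb{N}$, $P(\Theta_0 = t_0, \dots, \Theta_k = t_k) \leq \prod_{i=0}^k P(\hat\Theta_0 = t_i)$. Then for every measurable set $A \subseteq \mathbb{N}^{\mathbb{N}}$, $P((\Theta_k)_k \in A,\ \forall k\ \Theta_k < \infty) \leq P((\hat\Theta_k)_k \in A)$. -/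
open MeasureTheory ProbabilityTheory Finset

namespace Stmt8Aux

/-- Projection onto the first `n+1` coordinates. -/
def proj (n : ℕ) : (ℕ → ℕ) → (Fin (n + 1) → ℕ) := fun x i => x i

lemma measurable_proj (n : ℕ) : Measurable (proj n) :=
  measurable_pi_lambda _ fun _ => measurable_pi_apply _

/-- The algebra of cylinder sets. -/
def Alg : Set (Set (ℕ → ℕ)) :=
  {s | ∃ n, ∃ S : Set (Fin (n + 1) → ℕ), s = proj n ⁻¹' S}

lemma proj_preimage_mono {n m : ℕ} (hnm : n ≤ m) (S : Set (Fin (n + 1) → ℕ)) :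
    proj n ⁻¹' S =
      proj m ⁻¹'
        ((fun (a : Fin (m + 1) → ℕ) (i : Fin (n + 1)) =>
          a (Fin.castLE (by omega) i)) ⁻¹' S) := by
  ext x
  exact Iff.rfl

lemma isSetAlgebra_Alg : IsSetAlgebra Alg where
  empty_mem := ⟨0, ∅, by simp⟩
  compl_mem := by
    rintro s ⟨n, S, rfl⟩
    exact ⟨n, Sᶜ, by simp⟩
  union_mem := by
    rintro s t ⟨n, S, rfl⟩ ⟨m, T, rfl⟩
    rw [proj_preimage_mono (le_max_left n m) S, proj_preimage_mono (le_max_right n m) T,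
      ← Set.preimage_union]
    exact ⟨max n m, _, rfl⟩

lemma generateFrom_Alg :
    (inferInstance : MeasurableSpace (ℕ → ℕ)) = MeasurableSpace.generateFrom Alg := by
  apply le_antisymm
  · refine iSup_le fun i => ?_
    intro s hs
    obtain ⟨s', _, rfl⟩ := hs
    apply MeasurableSpace.measurableSet_generateFrom
    exact ⟨i, {b | b ⟨i, Nat.lt_succ_self i⟩ ∈ s'}, rfl⟩
  · refine MeasurableSpace.generateFrom_le ?_
    rintro s ⟨n, S, rfl⟩
    exact measurable_proj n S.to_countable.measurableSet

end Stmt8Aux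

open Stmt8Aux

/-- Stochastic domination lemma: if the finite-dimensional distributions of `(Θ_k)` are
dominated by products of the law of `Θ̂₀`, where `(Θ̂_k)` is i.i.d., then for any measurable
`A ⊆ ℕ^ℕ`, `P((Θ_k) ∈ A, ∀k Θ_k < ∞) ≤ P̂((Θ̂_k) ∈ A)`. -/
theorem stmt8 {Ω Ω' : Type*} [MeasurableSpace Ω] [MeasurableSpace Ω']
    (P : Measure Ω) [IsProbabilityMeasure P] (P' : Measure Ω') [IsProbabilityMeasure P']
    (Θ : ℕ → Ω → ℕ∞) (hΘmeas : ∀ k, Measurable (Θ k))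
    (Θhat : ℕ → Ω' → ℕ) (hΘhatmeas : ∀ k, Measurable (Θhat k))
    (hiid_indep : iIndepFun Θhat P')
    (hiid_ident : ∀ k, P'.map (Θhat k) = P'.map (Θhat 0))
    (hdom : ∀ k : ℕ, ∀ t : ℕ → ℕ,
      P {ω | ∀ i ≤ k, Θ i ω = (t i : ℕ∞)} ≤
        ∏ i ∈ Finset.range (k + 1), P' {ω' | Θhat 0 ω' = t i}) :
    ∀ A : Set (ℕ → ℕ), MeasurableSet A →
      P {ω | (∀ k, Θ k ω < ⊤) ∧ (fun k => (Θ k ω).toNat) ∈ A} ≤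
        P' {ω' | (fun k => Θhat k ω') ∈ A} := by
  classical
  intro A hA
  set g : Ω → (ℕ → ℕ) := fun ω k => (Θ k ω).toNat with hgdef
  have hgmeas : Measurable g :=
    measurable_pi_lambda _ fun k => (measurable_of_countable ENat.toNat).comp (hΘmeas k)
  set E : Set Ω := {ω | ∀ k, Θ k ω < ⊤} with hEdef
  have hEmeas : MeasurableSet E := by
    have : E = ⋂ k, Θ k ⁻¹' ({⊤}ᶜ) := by
      ext ω
      simp [hEdef, lt_top_iff_ne_top]
    rw [this]
    exact MeasurableSet.iInter fun k => (hΘmeas k) (measurableSet_singleton _).compl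
  set h : Ω' → (ℕ → ℕ) := fun ω' k => Θhat k ω' with hhdef
  have hhmeas : Measurable h := measurable_pi_lambda _ fun k => hΘhatmeas k
  set μ : Measure (ℕ → ℕ) := (P.restrict E).map g with hμdef
  set ν : Measure (ℕ → ℕ) := P'.map h with hνdef
  haveI : IsFiniteMeasure μ := by
    constructor
    rw [hμdef, Measure.map_apply hgmeas MeasurableSet.univ]
    exact (measure_lt_top _ _)
  haveI : IsFiniteMeasure ν := by
    constructor
    rw [hνdef, Measure.map_apply hhmeas MeasurableSet.univ]
    exact (measure_lt_top _ _)
  -- the key bound on point cylinders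
  have cyl_bound : ∀ (n : ℕ) (a : Fin (n + 1) → ℕ),
      μ (proj n ⁻¹' {a}) ≤ ν (proj n ⁻¹' {a}) := by
    intro n a
    set t : ℕ → ℕ := fun i => if hi : i < n + 1 then a ⟨i, hi⟩ else 0 with htdef
    have hcyl : proj n ⁻¹' {a} = {x : ℕ → ℕ | ∀ i ≤ n, x i = t i} := by
      ext x
      simp only [Set.mem_preimage, Set.mem_singleton_iff, Set.mem_setOf_eq, funext_iff]
      constructor
      · intro hx i hi
        have h1 := hx ⟨i, by omega⟩
        simp only [proj] at h1
        simp [htdef, h1, dif_pos (show i < n + 1 by omega)]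
        exact fun h => absurd h (by omega)
      · intro hx j
        have h1 := hx j (by omega : (j : ℕ) ≤ n)
        simpa [proj, htdef, dif_pos j.isLt, (show (j : ℕ) ≤ n by omega)] using h1
    have hmeas_cyl : MeasurableSet (proj n ⁻¹' ({a} : Set (Fin (n + 1) → ℕ))) :=
      measurable_proj n (measurableSet_singleton a)
    have h1 : μ (proj n ⁻¹' {a}) ≤
        ∏ i ∈ Finset.range (n + 1), P' {ω' | Θhat 0 ω' = t i} := by
      rw [hμdef, Measure.map_apply hgmeas hmeas_cyl, Measure.restrict_apply (hgmeas hmeas_cyl)]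
      refine le_trans (measure_mono ?_) (hdom n t)
      rintro ω ⟨hω1, hω2⟩
      intro i hi
      have hfin : Θ i ω < ⊤ := hω2 i
      have htoNat : (Θ i ω).toNat = t i := by
        have hmem : g ω ∈ {x : ℕ → ℕ | ∀ i ≤ n, x i = t i} := hcyl ▸ hω1
        exact hmem i hi
      rw [← htoNat, ENat.coe_toNat hfin.ne]
    have h2 : ν (proj n ⁻¹' {a}) =
        ∏ i ∈ Finset.range (n + 1), P' {ω' | Θhat 0 ω' = t i} := by
      rw [hνdef, Measure.map_apply hhmeas hmeas_cyl]
      have heq : h ⁻¹' (proj n ⁻¹' {a}) =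
          ⋂ i ∈ Finset.range (n + 1), Θhat i ⁻¹' {t i} := by
        ext ω'
        simp only [Set.mem_preimage, hcyl, Set.mem_setOf_eq, Set.mem_iInter,
          Finset.mem_range, Nat.lt_succ_iff, Set.mem_singleton_iff]
        exact Iff.rfl
      rw [heq, hiid_indep.meas_biInter (fun i _ => ⟨{t i}, measurableSet_singleton _, rfl⟩)]
      refine Finset.prod_congr rfl fun i _ => ?_
      have h3 : P' (Θhat i ⁻¹' {t i}) = P'.map (Θhat i) {t i} :=
        (Measure.map_apply (hΘhatmeas i) (measurableSet_singleton _)).symm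
      rw [h3, hiid_ident i, Measure.map_apply (hΘhatmeas 0) (measurableSet_singleton _)]
      rfl
    exact h1.trans_eq h2.symm
  -- the bound on the whole algebra of cylinder sets
  have key : ∀ s ∈ Alg, μ s ≤ ν s := by
    rintro s ⟨n, S, rfl⟩
    rw [← Set.biUnion_preimage_singleton (proj n) S]
    calc μ (⋃ a ∈ S, proj n ⁻¹' {a})
        ≤ ∑' a : S, μ (proj n ⁻¹' {(a : Fin (n + 1) → ℕ)}) :=
          measure_biUnion_le μ S.to_countable _
      _ ≤ ∑' a : S, ν (proj n ⁻¹' {(a : Fin (n + 1) → ℕ)}) :=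
          ENNReal.tsum_le_tsum fun a => cyl_bound n a
      _ = ν (⋃ a ∈ S, proj n ⁻¹' {a}) :=
          (measure_biUnion S.to_countable (Set.pairwiseDisjoint_fiber _ _)
            (fun a _ => measurable_proj n (measurableSet_singleton a))).symm
  -- rewrite the goal in terms of μ and ν
  have hLHS : P {ω | (∀ k, Θ k ω < ⊤) ∧ (fun k => (Θ k ω).toNat) ∈ A} = μ A := by
    rw [hμdef, Measure.map_apply hgmeas hA, Measure.restrict_apply (hgmeas hA)]
    congr 1
    ext ω
    simp only [Set.mem_setOf_eq, Set.mem_inter_iff, Set.mem_preimage, hEdef, hgdef]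
    tauto
  have hRHS : P' {ω' | (fun k => Θhat k ω') ∈ A} = ν A := by
    rw [hνdef, Measure.map_apply hhmeas hA]
    rfl
  rw [hLHS, hRHS]
  -- approximation argument using measure-density of the algebra
  have hdense : (μ + ν).MeasureDense Alg :=
    Measure.MeasureDense.of_generateFrom_isSetAlgebra_finite (μ + ν) isSetAlgebra_Alg generateFrom_Alg
  refine ENNReal.le_of_forall_pos_le_add fun ε hε _ => ?_
  obtain ⟨s, hsAlg, hs⟩ := hdense.approx A hA (measure_ne_top _ _) ε (by exact_mod_cast hε)
  have hsub1 : A ⊆ s ∪ symmDiff A s := by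
    intro x hx
    by_cases hxs : x ∈ s
    · exact Or.inl hxs
    · exact Or.inr (Set.mem_symmDiff.mpr (Or.inl ⟨hx, hxs⟩))
  have hsub2 : s ⊆ A ∪ symmDiff A s := by
    intro x hx
    by_cases hxA : x ∈ A
    · exact Or.inl hxA
    · exact Or.inr (Set.mem_symmDiff.mpr (Or.inr ⟨hx, hxA⟩))
  have hsum : μ (symmDiff A s) + ν (symmDiff A s) ≤ (ε : ENNReal) := by
    have := hs.le
    rw [Measure.add_apply] at this
    calc μ (symmDiff A s) + ν (symmDiff A s) ≤ ENNReal.ofReal ε := this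
      _ = (ε : ENNReal) := ENNReal.ofReal_coe_nnreal
  calc μ A ≤ μ (s ∪ symmDiff A s) := measure_mono hsub1
    _ ≤ μ s + μ (symmDiff A s) := measure_union_le _ _
    _ ≤ ν s + μ (symmDiff A s) := add_le_add (key s hsAlg) le_rfl
    _ ≤ (ν A + ν (symmDiff A s)) + μ (symmDiff A s) :=
        add_le_add ((measure_mono hsub2).trans (measure_union_le _ _)) le_rfl
    _ = ν A + (μ (symmDiff A s) + ν (symmDiff A s)) := by ring
    _ ≤ ν A + ε := add_le_add le_rfl hsum
end

section
/- Let $X$ and $Y$ be independent positive bounded random variables such that for some $\alpha_X, \alpha_Y, r > 0$: (i) there exists $C > 0$ with $P(X < \epsilon) \leq C\epsilon^{\alpha_X}$ for all $\epsilon > 0$; (ii) there exists $C' > 0$ with $P(Y < \epsilon) \leq C'\epsilon^{\alpha_Y}(-\ln\epsilon)^r$ for all sufficiently small $\epsilon > 0$. Then there exists $C'' > 0$ such that for all sufficiently small $\epsilon > 0$, $P(XY \leq \epsilon) \leq C''\epsilon^{\alpha_X \wedge \alpha_Y}(-\ln\epsilon)^{r+1}$. -/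
open MeasureTheory ProbabilityTheory

set_option maxHeartbeats 1000000 in
/-- Product tail lemma: if `P(X < ε) ≤ Cε^{α_X}` and `P(Y < ε) ≤ C'ε^{α_Y}(-ln ε)^r`
for `X, Y` independent positive bounded random variables, then for small `ε`,
`P(XY ≤ ε) ≤ C'' ε^{min(α_X,α_Y)} (-ln ε)^{r+1}`. -/
theorem stmt14 {Ω : Type*} [MeasurableSpace Ω] (P : Measure Ω) [IsProbabilityMeasure P]
    (X Y : Ω → ℝ) (hX : Measurable X) (hY : Measurable Y)
    (hindep : IndepFun X Y P)
    (hXpos : ∀ᵐ ω ∂P, 0 < X ω) (hYpos : ∀ᵐ ω ∂P, 0 < Y ω)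
    (B : ℝ) (hbd : ∀ᵐ ω ∂P, X ω ≤ B ∧ Y ω ≤ B)
    (αX αY r : ℝ) (hαX : 0 < αX) (hαY : 0 < αY) (hr : 0 < r)
    (C : ℝ) (hC : 0 < C)
    (htailX : ∀ ε : ℝ, 0 < ε → (P {ω | X ω < ε}).toReal ≤ C * ε ^ αX)
    (C' : ℝ) (hC' : 0 < C')
    (htailY : ∃ ε1 > 0, ∀ ε : ℝ, 0 < ε → ε ≤ ε1 →
      (P {ω | Y ω < ε}).toReal ≤ C' * ε ^ αY * (-Real.log ε) ^ r) :
    ∃ C'' > 0, ∃ ε0 > 0, ∀ ε : ℝ, 0 < ε → ε ≤ ε0 →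
      (P {ω | X ω * Y ω ≤ ε}).toReal ≤
        C'' * ε ^ (min αX αY) * (-Real.log ε) ^ (r + 1) := by
  classical
  obtain ⟨ε1, hε1, htY⟩ := htailY
  obtain ⟨ω0, hω0⟩ := (hXpos.and hbd).exists
  have hB : 0 < B := lt_of_lt_of_le hω0.1 hω0.2.1
  set ε2 : ℝ := min ε1 (1/2) with hε2def
  have hε2pos : 0 < ε2 := lt_min hε1 (by norm_num)
  have hε2le : ε2 ≤ 1/2 := min_le_right _ _
  set M : ℝ := 1 + |Real.log (2/B)| + |Real.log B| with hMdef
  have hM1 : (1:ℝ) ≤ M := by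
    have := abs_nonneg (Real.log (2/B)); have := abs_nonneg (Real.log B)
    simp only [hMdef]; linarith
  have h2B : (0:ℝ) < 2*B := by linarith
  have h2B' : (0:ℝ) < 2/B := by positivity
  have hp1 : (0:ℝ) < (2*B)^αX := Real.rpow_pos_of_pos h2B _
  have hp2 : (0:ℝ) < (2/B)^αY := Real.rpow_pos_of_pos h2B' _
  have hp3 : (0:ℝ) < (2:ℝ)^r := Real.rpow_pos_of_pos two_pos _
  have hp4 : (0:ℝ) < (2*B)^(αY-αX) := Real.rpow_pos_of_pos h2B _
  set K1 : ℝ := C * C' * (2*B)^αX * (2/B)^αY * 2^r * (1 + (2*B)^(αY-αX)) with hK1def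
  set K3 : ℝ := C * (4/ε2)^αX with hK3def
  have hK1 : 0 < K1 := by
    have : (0:ℝ) < 1 + (2*B)^(αY-αX) := by linarith
    exact mul_pos (mul_pos (mul_pos (mul_pos (mul_pos hC hC') hp1) hp2) hp3) this
  have hK3 : 0 < K3 := mul_pos hC (Real.rpow_pos_of_pos (by positivity) _)
  set K : ℝ := K1 + K3 with hKdef
  have hK : 0 < K := by linarith
  have hC''pos : (0:ℝ) < 6*(K+C) := by linarith
  refine ⟨6*(K+C), hC''pos, min (Real.exp (-M)) (min B (1/2)),
    lt_min (Real.exp_pos _) (lt_min hB (by norm_num)), ?_⟩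
  intro ε hε hεle
  set m : ℝ := min αX αY with hmdef
  have hm : 0 < m := lt_min hαX hαY
  have hmX : m ≤ αX := min_le_left _ _
  have hεe : ε ≤ Real.exp (-M) := le_trans hεle (min_le_left _ _)
  have hεB : ε ≤ B := le_trans hεle (le_trans (min_le_right _ _) (min_le_left _ _))
  have hεhalf : ε ≤ 1/2 := le_trans hεle (le_trans (min_le_right _ _) (min_le_right _ _))
  have hε1' : ε ≤ 1 := by linarith
  set L : ℝ := -Real.log ε with hLdef
  have hlogε : Real.log ε ≤ -M := by
    have h := Real.log_le_log hε hεe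
    rwa [Real.log_exp] at h
  have hML : M ≤ L := by simp only [hLdef]; linarith
  have hL1 : (1:ℝ) ≤ L := le_trans hM1 hML
  have hLpos : (0:ℝ) < L := by linarith
  have hLlog2B : |Real.log (2/B)| ≤ L := by
    have := abs_nonneg (Real.log B); simp only [hMdef] at hML; linarith
  have hLlogB : Real.log B ≤ L := by
    have h1 : Real.log B ≤ |Real.log B| := le_abs_self _
    have := abs_nonneg (Real.log (2/B)); simp only [hMdef] at hML; linarith
  have hLr1 : (1:ℝ) ≤ L^r := by
    calc (1:ℝ) = (1:ℝ)^r := by simp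
    _ ≤ L^r := Real.rpow_le_rpow (by norm_num) hL1 hr.le
  have hεm_pos : 0 < ε^m := Real.rpow_pos_of_pos hε _
  have hml : (0:ℝ) < ε^m * L^r := mul_pos hεm_pos (by linarith)
  -- the dyadic scale count
  set N : ℕ := ⌈Real.logb 2 (B/ε)⌉₊ with hNdef
  have hBε1 : (1:ℝ) ≤ B/ε := (one_le_div hε).mpr hεB
  have hBεpos : (0:ℝ) < B/ε := by positivity
  have hlogb0 : 0 ≤ Real.logb 2 (B/ε) := Real.logb_nonneg one_lt_two hBε1
  have hN1 : B/ε ≤ (2:ℝ)^N := by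
    calc B/ε = (2:ℝ)^(Real.logb 2 (B/ε)) :=
        (Real.rpow_logb two_pos (by norm_num) hBεpos).symm
    _ ≤ (2:ℝ)^((N:ℝ)) := Real.rpow_le_rpow_of_exponent_le one_le_two (Nat.le_ceil _)
    _ = (2:ℝ)^N := Real.rpow_natCast 2 N
  have hN2 : (2:ℝ)^N ≤ 2*(B/ε) := by
    have h1 : (N:ℝ) ≤ Real.logb 2 (B/ε) + 1 := (Nat.ceil_lt_add_one hlogb0).le
    calc (2:ℝ)^N = (2:ℝ)^((N:ℝ)) := (Real.rpow_natCast 2 N).symm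
    _ ≤ (2:ℝ)^(Real.logb 2 (B/ε) + 1) := Real.rpow_le_rpow_of_exponent_le one_le_two h1
    _ = (2:ℝ)^(Real.logb 2 (B/ε)) * 2 := by
        rw [Real.rpow_add_one (by norm_num : (2:ℝ) ≠ 0)]
    _ = 2*(B/ε) := by rw [Real.rpow_logb two_pos (by norm_num) hBεpos]; ring
  have hN3 : (N:ℝ) + 2 ≤ 6*L := by
    have h1 : (N:ℝ) < Real.logb 2 (B/ε) + 1 := Nat.ceil_lt_add_one hlogb0
    have h2 : Real.logb 2 (B/ε) = (Real.log B + L)/Real.log 2 := by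
      rw [Real.logb, Real.log_div (ne_of_gt hB) (ne_of_gt hε)]; simp only [hLdef]; ring
    have hlog2 : (0.6931471803:ℝ) < Real.log 2 := Real.log_two_gt_d9
    have h3 : Real.logb 2 (B/ε) ≤ 3*L := by
      rw [h2, div_le_iff₀ (by linarith : (0:ℝ) < Real.log 2)]
      have h5 : Real.log B + L ≤ 2*L := by linarith only [hLlogB]
      have h7 : (0:ℝ) ≤ L*(3*Real.log 2 - 2) :=
        mul_nonneg (by linarith only [hL1]) (by linarith only [hlog2])
      linarith only [h5, h7]
    linarith
  -- basic tail helpers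
  have hpX : ∀ s : ℝ, 0 < s → (P {ω | X ω ≤ s}).toReal ≤ C * (2*s)^αX := by
    intro s hs
    have hsub : {ω | X ω ≤ s} ⊆ {ω | X ω < 2*s} := by
      intro ω h
      simp only [Set.mem_setOf_eq] at h ⊢
      linarith
    exact le_trans (ENNReal.toReal_mono (measure_ne_top _ _) (measure_mono hsub))
      (htailX _ (by linarith))
  have hple1 : ∀ s : Set Ω, (P s).toReal ≤ 1 := by
    intro s
    have := ENNReal.toReal_mono (by norm_num) (prob_le_one (μ := P) (s := s))
    simpa using this
  -- the events
  set b : ℕ → ℝ := fun k => B / 2^k with hbdef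
  set t : ℕ → ℝ := fun k => ε * 2^(k+1) / B with htdef
  have hbpos : ∀ k, 0 < b k := fun k => by simp only [hbdef]; positivity
  have htpos : ∀ k, 0 < t k := fun k => by simp only [htdef]; positivity
  -- covering
  have key : P {ω | X ω * Y ω ≤ ε} ≤
      P {ω | X ω ≤ b (N+1)} +
        ∑ k ∈ Finset.range (N+1), P ({ω | X ω ≤ b k} ∩ {ω | Y ω < t k}) := by
    have hmono : P {ω | X ω * Y ω ≤ ε} ≤
        P ({ω | X ω ≤ b (N+1)} ∪ ⋃ k ∈ Finset.range (N+1),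
          ({ω | X ω ≤ b k} ∩ {ω | Y ω < t k})) := by
      refine measure_mono_ae ?_
      filter_upwards [hXpos, hYpos, hbd] with ω hx hy hbdω
      intro hxy
      have hxy' : X ω * Y ω ≤ ε := hxy
      by_cases hcase : X ω ≤ b (N+1)
      · exact Or.inl hcase
      · push_neg at hcase
        set Q : ℕ → Prop := fun k => X ω ≤ B / 2^k with hQdef
        have hQ0 : Q 0 := by simp only [hQdef, pow_zero, div_one]; exact hbdω.1
        set k := Nat.findGreatest Q N with hkdef
        have hk_le : k ≤ N := Nat.findGreatest_le N
        have hQk : Q k := Nat.findGreatest_spec (Nat.zero_le N) hQ0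
        have hnotk1 : ¬ Q (k+1) := by
          rcases eq_or_lt_of_le hk_le with heq | hlt
          · intro h
            rw [heq] at h
            simp only [hQdef] at h
            simp only [hbdef] at hcase
            exact absurd h (not_le.mpr hcase)
          · exact Nat.findGreatest_is_greatest (Nat.lt_succ_self k) hlt
        have hXgt : B/2^(k+1) < X ω := by
          simp only [hQdef] at hnotk1
          exact not_le.mp hnotk1
        refine Or.inr (Set.mem_biUnion (Finset.mem_range.mpr (Nat.lt_succ_of_le hk_le))
          ⟨hQk, ?_⟩)
        simp only [Set.mem_setOf_eq, htdef]
        have h2k1 : (0:ℝ) < 2^(k+1) := by positivity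
        have hYle : Y ω * X ω ≤ ε := by rw [mul_comm]; exact hxy'
        rw [lt_div_iff₀ hB]
        have h1 : B < 2^(k+1) * X ω := by
          rw [div_lt_iff₀ h2k1] at hXgt; linarith [hXgt]
        linarith only [mul_lt_mul_of_pos_left h1 hy, mul_le_mul_of_nonneg_left hYle h2k1.le]
    refine hmono.trans ?_
    refine (measure_union_le _ _).trans ?_
    gcongr
    exact measure_biUnion_finset_le _ _
  -- independence
  have hprod : ∀ k, P ({ω | X ω ≤ b k} ∩ {ω | Y ω < t k})
      = P {ω | X ω ≤ b k} * P {ω | Y ω < t k} := by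
    intro k
    exact hindep.measure_inter_preimage_eq_mul (Set.Iic (b k)) (Set.Iio (t k))
      measurableSet_Iic measurableSet_Iio
  -- real version
  have keyR : (P {ω | X ω * Y ω ≤ ε}).toReal ≤
      (P {ω | X ω ≤ b (N+1)}).toReal +
        ∑ k ∈ Finset.range (N+1),
          (P {ω | X ω ≤ b k}).toReal * (P {ω | Y ω < t k}).toReal := by
    have hlt : (∑ k ∈ Finset.range (N+1),
        P ({ω | X ω ≤ b k} ∩ {ω | Y ω < t k})) ≠ ⊤ :=
      (ENNReal.sum_lt_top.mpr fun k _ => measure_lt_top _ _).ne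
    have hne : (P {ω | X ω ≤ b (N+1)} +
        ∑ k ∈ Finset.range (N+1), P ({ω | X ω ≤ b k} ∩ {ω | Y ω < t k})) ≠ ⊤ :=
      ENNReal.add_ne_top.mpr ⟨measure_ne_top _ _, hlt⟩
    have h2 := ENNReal.toReal_mono hne key
    rw [ENNReal.toReal_add (measure_ne_top _ _) hlt,
      ENNReal.toReal_sum (fun k _ => measure_ne_top _ _)] at h2
    refine h2.trans ?_
    gcongr with k hk
    rw [hprod k, ENNReal.toReal_mul]
  -- per-term bound
  have hterm : ∀ k ∈ Finset.range (N+1),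
      (P {ω | X ω ≤ b k}).toReal * (P {ω | Y ω < t k}).toReal ≤ K * (ε^m * L^r) := by
    intro k hk
    have hkN : k ≤ N := Nat.lt_succ_iff.mp (Finset.mem_range.mp hk)
    have h2k : (0:ℝ) < 2^k := by positivity
    have h2k1 : (1:ℝ) ≤ 2^k := one_le_pow₀ one_le_two
    have hXk : (P {ω | X ω ≤ b k}).toReal ≤ C * (2 * b k)^αX := hpX _ (hbpos k)
    have hXk0 : (0:ℝ) ≤ (P {ω | X ω ≤ b k}).toReal := ENNReal.toReal_nonneg
    have hYk0 : (0:ℝ) ≤ (P {ω | Y ω < t k}).toReal := ENNReal.toReal_nonneg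
    rcases le_or_gt (t k) ε2 with hcase | hcase
    · -- use the Y tail bound
      have hYk : (P {ω | Y ω < t k}).toReal ≤ C' * (t k)^αY * (-Real.log (t k))^r :=
        htY _ (htpos k) (le_trans hcase (min_le_left _ _))
      have htneg : Real.log (t k) < 0 := Real.log_neg (htpos k) (by linarith)
      have hlogt : -Real.log (t k) ≤ 2*L := by
        have h2' : (2:ℝ) ≤ 2^(k+1) := by
          calc (2:ℝ) = 2^1 := (pow_one 2).symm
          _ ≤ 2^(k+1) := pow_le_pow_right₀ one_le_two (by omega)
        have h1 : Real.log (ε * (2/B)) ≤ Real.log (t k) := by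
          apply Real.log_le_log (mul_pos hε h2B')
          have h3 : ε*2 ≤ ε*2^(k+1) := mul_le_mul_of_nonneg_left h2' hε.le
          simp only [htdef]
          rw [show ε * (2/B) = (ε*2)/B by ring, div_le_div_iff₀ hB hB]
          linarith only [mul_le_mul_of_nonneg_right h3 hB.le]
        have h2 : Real.log (ε * (2/B)) = Real.log ε + Real.log (2/B) :=
          Real.log_mul (ne_of_gt hε) (ne_of_gt h2B')
        have h3 := neg_abs_le (Real.log (2/B))
        linarith only [hLdef.le, hLdef.ge, hLlog2B, h1, h2, h3]
      have hlogt_pow : (-Real.log (t k))^r ≤ 2^r * L^r := by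
        calc (-Real.log (t k))^r ≤ (2*L)^r :=
            Real.rpow_le_rpow (by linarith) hlogt hr.le
        _ = 2^r * L^r := Real.mul_rpow (by norm_num) hLpos.le
      -- base product bound
      have hbase : (2 * b k)^αX * (t k)^αY
          ≤ (2*B)^αX * (2/B)^αY * ((1 + (2*B)^(αY-αX)) * ε^m) := by
        have e1 : 2 * b k = (2*B) / 2^k := by simp only [hbdef]; ring
        have e2 : t k = (2/B) * (ε * 2^k) := by
          simp only [htdef]; field_simp; ring
        rw [e1, e2, Real.div_rpow h2B.le h2k.le, Real.mul_rpow h2B'.le (by positivity),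
          Real.mul_rpow hε.le h2k.le]
        have hcl : ε^αY * ((2^k:ℝ))^αY / ((2^k:ℝ))^αX ≤ (1 + (2*B)^(αY-αX)) * ε^m := by
          have e3 : ε^αY * ((2^k:ℝ))^αY / ((2^k:ℝ))^αX = ε^αY * ((2^k:ℝ))^(αY-αX) := by
            rw [Real.rpow_sub h2k]; ring
          rw [e3]
          rcases le_total αY αX with hYX | hXY
          · have h4 : ((2^k:ℝ))^(αY-αX) ≤ 1 :=
              Real.rpow_le_one_of_one_le_of_nonpos h2k1 (by linarith)
            have h5 : ε^αY = ε^m := by rw [hmdef, min_eq_right hYX]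
            have h6 : ε^αY * ((2^k:ℝ))^(αY-αX) ≤ ε^αY := by
              simpa using mul_le_mul_of_nonneg_left h4 (Real.rpow_nonneg hε.le αY)
            linarith only [h6.trans (le_of_eq h5), mul_pos hp4 hεm_pos]
          · have hd : (0:ℝ) ≤ αY - αX := by linarith
            have h4 : ((2^k:ℝ))^(αY-αX) ≤ ((2*B)/ε)^(αY-αX) := by
              apply Real.rpow_le_rpow h2k.le _ hd
              calc ((2:ℝ)^k) ≤ (2:ℝ)^N := pow_le_pow_right₀ one_le_two hkN
              _ ≤ 2*(B/ε) := hN2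
              _ = (2*B)/ε := by ring
            have h5 : ((2*B)/ε)^(αY-αX) = (2*B)^(αY-αX) / ε^(αY-αX) :=
              Real.div_rpow h2B.le hε.le _
            have h6 : ε^αY / ε^(αY-αX) = ε^αX := by
              rw [← Real.rpow_sub hε]; congr 1; ring
            have h7 : ε^αX = ε^m := by rw [hmdef, min_eq_left hXY]
            calc ε^αY * ((2^k:ℝ))^(αY-αX)
                ≤ ε^αY * ((2*B)/ε)^(αY-αX) :=
                  mul_le_mul_of_nonneg_left h4 (Real.rpow_nonneg hε.le αY)
            _ = (2*B)^(αY-αX) * (ε^αY / ε^(αY-αX)) := by rw [h5]; ring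
            _ = (2*B)^(αY-αX) * ε^αX := by rw [h6]
            _ ≤ (1 + (2*B)^(αY-αX)) * ε^m := by
                  rw [← h7]
                  linarith only [Real.rpow_pos_of_pos hε αX,
                    mul_pos hp4 (Real.rpow_pos_of_pos hε αX)]
        calc (2*B)^αX / ((2^k:ℝ))^αX * ((2/B)^αY * (ε^αY * ((2^k:ℝ))^αY))
            = (2*B)^αX * (2/B)^αY * (ε^αY * ((2^k:ℝ))^αY / ((2^k:ℝ))^αX) := by ring
        _ ≤ (2*B)^αX * (2/B)^αY * ((1 + (2*B)^(αY-αX)) * ε^m) :=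
              mul_le_mul_of_nonneg_left hcl (le_of_lt (mul_pos hp1 hp2))
      -- combine
      have hprod_le : (P {ω | X ω ≤ b k}).toReal * (P {ω | Y ω < t k}).toReal
          ≤ (C * (2 * b k)^αX) * (C' * (t k)^αY * (-Real.log (t k))^r) := by
        apply mul_le_mul hXk hYk hYk0 ?_
        have : (0:ℝ) < (2 * b k)^αX := Real.rpow_pos_of_pos (by linarith [hbpos k]) _
        positivity
      refine hprod_le.trans ?_
      have hfinal : (C * (2 * b k)^αX) * (C' * (t k)^αY * (-Real.log (t k))^r)
          ≤ K1 * (ε^m * L^r) := by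
        have h0 : (0:ℝ) ≤ -Real.log (t k) := by linarith
        have hb1 : (0:ℝ) < (2 * b k)^αX := Real.rpow_pos_of_pos (by linarith [hbpos k]) _
        have hb2 : (0:ℝ) < (t k)^αY := Real.rpow_pos_of_pos (htpos k) _
        calc (C * (2 * b k)^αX) * (C' * (t k)^αY * (-Real.log (t k))^r)
            = (C * C') * ((2 * b k)^αX * (t k)^αY) * (-Real.log (t k))^r := by ring
        _ ≤ (C * C') * ((2*B)^αX * (2/B)^αY * ((1 + (2*B)^(αY-αX)) * ε^m)) * (2^r * L^r) := by
              apply mul_le_mul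
              · exact mul_le_mul_of_nonneg_left hbase (by positivity)
              · exact hlogt_pow
              · exact Real.rpow_nonneg h0 r
              · positivity
        _ = K1 * (ε^m * L^r) := by rw [hK1def]; ring
      refine hfinal.trans ?_
      rw [hKdef]
      linarith only [mul_pos hK3 hml]
    · -- t k > ε2 : use trivial bound on Y
      have hbk : 2 * b k < 4*ε/ε2 := by
        have hh : ε2 * B < ε * 2^(k+1) := by
          have h := hcase
          simp only [htdef] at h
          rw [lt_div_iff₀ hB] at h; linarith
        rw [pow_succ] at hh
        rw [show 2 * b k = (2*B)/2^k by simp only [hbdef]; ring,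
          div_lt_div_iff₀ h2k hε2pos]
        linarith only [hh]
      have hXk2 : (P {ω | X ω ≤ b k}).toReal ≤ C * (4*ε/ε2)^αX := by
        refine hXk.trans ?_
        have h1 := Real.rpow_le_rpow (by linarith [hbpos k] : (0:ℝ) ≤ 2 * b k) hbk.le hαX.le
        exact mul_le_mul_of_nonneg_left h1 hC.le
      have he : (4*ε/ε2)^αX = (4/ε2)^αX * ε^αX := by
        rw [← Real.mul_rpow (by positivity) hε.le]
        congr 1; field_simp
      have hεax : ε^αX ≤ ε^m := Real.rpow_le_rpow_of_exponent_ge hε hε1' hmX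
      calc (P {ω | X ω ≤ b k}).toReal * (P {ω | Y ω < t k}).toReal
          ≤ (C * (4*ε/ε2)^αX) * 1 := by
            apply mul_le_mul hXk2 (hple1 _) hYk0 ?_
            have : (0:ℝ) < (4*ε/ε2)^αX := Real.rpow_pos_of_pos (by positivity) _
            positivity
      _ = K3 * ε^αX := by rw [he, hK3def]; ring
      _ ≤ K3 * (ε^m * L^r) := by
            have h2 : ε^m ≤ ε^m * L^r := by
              simpa using mul_le_mul_of_nonneg_left hLr1 hεm_pos.le
            exact mul_le_mul_of_nonneg_left (hεax.trans h2) hK3.le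
      _ ≤ K * (ε^m * L^r) := by
            rw [hKdef]
            linarith only [mul_pos hK1 hml]
  -- last event bound
  have hlast : (P {ω | X ω ≤ b (N+1)}).toReal ≤ C * (ε^m * L^r) := by
    have hsub : {ω | X ω ≤ b (N+1)} ⊆ {ω | X ω < ε} := by
      intro ω h
      simp only [Set.mem_setOf_eq, hbdef] at h ⊢
      have h1 : B / 2^(N+1) ≤ ε/2 := by
        rw [div_le_div_iff₀ (by positivity : (0:ℝ) < 2^(N+1)) (by norm_num : (0:ℝ) < 2)]
        have h2 := hN1
        rw [div_le_iff₀ hε] at h2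
        calc B * 2 ≤ (ε * 2^N) * 2 := by linarith
        _ = ε * 2^(N+1) := by ring
      linarith
    have h1 : (P {ω | X ω ≤ b (N+1)}).toReal ≤ C * ε^αX :=
      le_trans (ENNReal.toReal_mono (measure_ne_top _ _) (measure_mono hsub)) (htailX _ hε)
    have hεax : ε^αX ≤ ε^m := Real.rpow_le_rpow_of_exponent_ge hε hε1' hmX
    calc (P {ω | X ω ≤ b (N+1)}).toReal ≤ C * ε^αX := h1
    _ ≤ C * ε^m := mul_le_mul_of_nonneg_left hεax hC.le
    _ ≤ C * (ε^m * L^r) := by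
          have h2 : ε^m ≤ ε^m * L^r := by
            simpa using mul_le_mul_of_nonneg_left hLr1 hεm_pos.le
          exact mul_le_mul_of_nonneg_left h2 hC.le
  -- assemble
  have hsum : ∑ k ∈ Finset.range (N+1),
      (P {ω | X ω ≤ b k}).toReal * (P {ω | Y ω < t k}).toReal
      ≤ ((N:ℝ)+1) * (K * (ε^m * L^r)) := by
    have h1 := Finset.sum_le_card_nsmul (Finset.range (N+1)) _ _ hterm
    rwa [Finset.card_range, nsmul_eq_mul, Nat.cast_add, Nat.cast_one] at h1
  have htotal : (P {ω | X ω * Y ω ≤ ε}).toReal ≤ ((N:ℝ)+2) * (K+C) * (ε^m * L^r) := by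
    refine keyR.trans ?_
    calc (P {ω | X ω ≤ b (N+1)}).toReal + ∑ k ∈ Finset.range (N+1),
        (P {ω | X ω ≤ b k}).toReal * (P {ω | Y ω < t k}).toReal
        ≤ C * (ε^m * L^r) + ((N:ℝ)+1) * (K * (ε^m * L^r)) :=
          add_le_add hlast hsum
    _ ≤ ((N:ℝ)+2) * (K+C) * (ε^m * L^r) := by
          linarith only [mul_pos hK hml, mul_pos hC hml,
            mul_nonneg (Nat.cast_nonneg (α := ℝ) N) (mul_pos hC hml).le]
  refine htotal.trans ?_
  have hrw : L^(r+1) = L^r * L := Real.rpow_add_one (ne_of_gt hLpos) r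
  calc ((N:ℝ)+2) * (K+C) * (ε^m * L^r) ≤ (6*L) * (K+C) * (ε^m * L^r) := by
        have hKC : (0:ℝ) ≤ K+C := by linarith
        exact mul_le_mul_of_nonneg_right (mul_le_mul_of_nonneg_right hN3 hKC) hml.le
  _ = 6*(K+C) * ε^m * (L^r * L) := by ring
  _ = 6*(K+C) * ε^m * L^(r+1) := by rw [hrw]
end

section
/- Let $\Lambda = \{x \in \mathbb{Z}^d : \|x\|_\infty \leq R_\Lambda\}$ be a box of radius $R_\Lambda$ in $\mathbb{Z}^d$ containing $0$, and let $(\alpha_e)_{e}$ assign weight $\alpha_i > 0$ to every edge $(x, x+e_i)$, $i = 1,\dots,2d$ (with $e_{j+d} = -e_j$). Define $\kappa^\Lambda = \min\{\sum_{e \in \partial_+(K)} \alpha_e : K \text{ a finite connected vertex set},\ 0 \in K,\ K \cap \partial\Lambda \neq \emptyset\}$, where $\partial_+(K)$ is the set of directed edges from $K$ to its complement and $\partial\Lambda$ the inner boundary of $\Lambda$. Then $\kappa^\Lambda = \min_{i_0 \in \{1,\dots,d\}}\big(\alpha_{i_0} + \alpha_{i_0+d} + (R_\Lambda + 1)\sum_{i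 \neq i_0}(\alpha_i + \alpha_{i+d})\big)$. -/
open Finset

namespace Stmt15Aux

variable {d : ℕ}

/-- discrete intermediate value theorem for integer lists with steps of size ≤ 1 -/
lemma ivt : ∀ (l : List ℤ) (a b : ℤ), l.Chain' (fun u v => u - 1 ≤ v ∧ v ≤ u + 1) →
    l.head? = some a → l.getLast? = some b → ∀ m : ℤ,
    (a ≤ m ∧ m ≤ b) ∨ (b ≤ m ∧ m ≤ a) → m ∈ l
  | [], a, b => by simp
  | [x], a, b => by
      intro _ h1 h2 m hm
      simp only [List.head?_cons, Option.some.injEq] at h1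
      simp only [List.getLast?_singleton, Option.some.injEq] at h2
      subst h1; subst h2
      have : m = x := by omega
      simp [this]
  | x :: y :: tl, a, b => by
      intro hc h1 h2 m hm
      simp only [List.head?_cons, Option.some.injEq] at h1
      subst h1
      rcases eq_or_ne m x with rfl | hne
      · exact List.mem_cons_self
      · unfold List.Chain' at hc
        rw [List.isChain_cons_cons] at hc
        have hlast : (y :: tl).getLast? = some b := by
          rw [← h2, List.getLast?_cons_cons]
        have hrec := ivt (y :: tl) y b hc.2 rfl hlast m (by
          obtain ⟨h1, h2⟩ := hc.1
          omega)
        exact List.mem_cons_of_mem _ hrec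

lemma cut_card (K : Finset (Fin d → ℤ)) (i : Fin d) (s : Bool) :
    (K.image fun x => Function.update x i 0).card ≤
      (K.filter fun x => x + (fun j => if j = i then (if s then (1:ℤ) else -1) else 0) ∉ K).card := by
  set dirv : Fin d → ℤ := fun j => if j = i then (if s then (1:ℤ) else -1) else 0 with hdirv
  apply Finset.card_le_card_of_surjOn (fun x => Function.update x i 0)
  intro y hy
  simp only [Finset.coe_image, Set.mem_image, Finset.mem_coe] at hy
  obtain ⟨x, hxK, hxy⟩ := hy
  have hupd : ∀ z : Fin d → ℤ, Function.update (z + dirv) i 0 = Function.update z i 0 := by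
    intro z
    funext j
    rcases eq_or_ne j i with rfl | hj
    · simp [Function.update]
    · simp [Function.update, hj, hdirv, Pi.add_apply]
  set F := K.filter (fun z => Function.update z i 0 = y) with hF
  have hFne : F.Nonempty := ⟨x, by simp [hF, hxK, hxy]⟩
  cases s with
  | true =>
      obtain ⟨z, hzF, hzmax⟩ := F.exists_max_image (fun z => z i) hFne
      simp only [hF, Finset.mem_filter] at hzF
      refine ⟨z, ?_, hzF.2⟩
      simp only [Finset.coe_filter, Set.mem_setOf_eq]
      refine ⟨hzF.1, fun hc => ?_⟩
      have h1 : Function.update (z + dirv) i 0 = y := by rw [hupd]; exact hzF.2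
      have h2 := hzmax (z + dirv) (by simp [hF, hc, h1])
      simp [hdirv, Pi.add_apply] at h2
  | false =>
      obtain ⟨z, hzF, hzmin⟩ := F.exists_min_image (fun z => z i) hFne
      simp only [hF, Finset.mem_filter] at hzF
      refine ⟨z, ?_, hzF.2⟩
      simp only [Finset.coe_filter, Set.mem_setOf_eq]
      refine ⟨hzF.1, fun hc => ?_⟩
      have h1 : Function.update (z + dirv) i 0 = y := by rw [hupd]; exact hzF.2
      have h2 := hzmin (z + dirv) (by simp [hF, hc, h1])
      simp [hdirv, Pi.add_apply] at h2

end Stmt15Aux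

open Stmt15Aux

/-- Explicit formula for the min-cut exponent `κ^Λ` when `Λ` is a box of radius `R`:
the minimum of `∑_{e ∈ ∂₊(K)} α_e` over finite connected vertex sets `K` containing `0`
and meeting `∂Λ` equals
`min_{i₀} (α_{i₀} + α_{i₀+d} + (R+1) ∑_{i ≠ i₀} (α_i + α_{i+d}))`. -/
theorem stmt15 (d : ℕ) (hd : 0 < d) (R : ℕ) (α : Fin d × Bool → ℝ) (hα : ∀ p, 0 < α p) :
    -- unit steps in `ℤ^d`
    letI V := Fin d → ℤ
    let dir : Fin d → Bool → V := fun i s => fun j => if j = i then (if s then 1 else -1) else 0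
    let Adj : V → V → Prop := fun x y => ∃ i s, y = x + dir i s
    -- the box `Λ` of radius `R` and its inner boundary
    let Lam : Set V := {x | ∀ i, |x i| ≤ (R : ℤ)}
    let bdry : Set V := {x | x ∈ Lam ∧ ∃ i s, x + dir i s ∉ Lam}
    -- sum of weights of directed edges exiting a finite vertex set `K`
    let β : Finset V → ℝ := fun K =>
      ∑ x ∈ K, ∑ p ∈ Finset.univ.filter (fun p : Fin d × Bool => x + dir p.1 p.2 ∉ K), α p
    -- connectedness of `K` (every point of `K` joined to `0` by a nearest-neighbour
    -- path inside `K`)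
    let Conn : Finset V → Prop := fun K => ∀ x ∈ K, ∃ l : List V,
      l.Chain' Adj ∧ l.head? = some 0 ∧ l.getLast? = some x ∧ ∀ y ∈ l, y ∈ K
    IsLeast {S : ℝ | ∃ K : Finset V, (0 : V) ∈ K ∧ Conn K ∧ (∃ x ∈ K, x ∈ bdry) ∧ S = β K}
      (Finset.univ.inf' (Finset.univ_nonempty_iff.mpr ⟨⟨0, hd⟩⟩)
        fun i0 : Fin d => α (i0, true) + α (i0, false) +
          (R + 1 : ℝ) * ∑ i ∈ Finset.univ.erase i0, (α (i, true) + α (i, false))) := by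
  intro dir Adj Lam bdry β Conn
  have hdir : ∀ (i : Fin d) (s : Bool) (j : Fin d),
      dir i s j = if j = i then (if s then 1 else -1) else 0 := fun _ _ _ => rfl
  set term : Fin d → ℝ := fun i0 => α (i0, true) + α (i0, false) +
      (R + 1 : ℝ) * ∑ i ∈ Finset.univ.erase i0, (α (i, true) + α (i, false)) with hterm
  constructor
  · -- membership: the straight segment achieves the minimum
    obtain ⟨i0, -, hi0⟩ := Finset.exists_mem_eq_inf' (Finset.univ_nonempty_iff.mpr ⟨⟨0, hd⟩⟩) term
    set v : ℕ → (Fin d → ℤ) := fun k j => if j = i0 then (k : ℤ) else 0 with hv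
    set K0 : Finset (Fin d → ℤ) := (Finset.range (R+1)).image v with hK0
    have hv0 : v 0 = (0 : Fin d → ℤ) := by funext j; simp [hv]
    have hmemK0 : ∀ w : Fin d → ℤ, w ∈ K0 ↔ ∃ k ≤ R, w = v k := by
      intro w
      simp only [hK0, Finset.mem_image, Finset.mem_range, Nat.lt_succ_iff]
      constructor
      · rintro ⟨k, hk, rfl⟩; exact ⟨k, hk, rfl⟩
      · rintro ⟨k, hk, rfl⟩; exact ⟨k, hk, rfl⟩
    have hstep : ∀ m : ℕ, v (m+1) = v m + dir i0 true := by
      intro m; funext j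
      rcases eq_or_ne j i0 with rfl | hj
      · simp [hv, Pi.add_apply, hdir]
      · simp [hv, Pi.add_apply, hdir, hj]
    refine ⟨K0, ?_, ?_, ?_, ?_⟩
    · rw [hmemK0]; exact ⟨0, Nat.zero_le _, hv0.symm⟩
    · -- connectedness
      intro x hx
      obtain ⟨k, hk, rfl⟩ := (hmemK0 x).mp hx
      refine ⟨(List.range (k+1)).map v, ?_, ?_, ?_, ?_⟩
      · unfold List.Chain'
        rw [List.isChain_map, List.isChain_range_succ]
        intro m _
        exact ⟨i0, true, hstep m⟩
      · rw [List.head?_map]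
        rw [show (List.range (k+1)).head? = some 0 by
          rw [List.range_succ_eq_map]; rfl]
        simp [hv0]
      · rw [List.getLast?_map]
        rw [show (List.range (k+1)).getLast? = some k by
          rw [List.range_succ]; exact List.getLast?_concat]
        rfl
      · intro y hy
        obtain ⟨m, hm, rfl⟩ := List.mem_map.mp hy
        rw [List.mem_range, Nat.lt_succ_iff] at hm
        exact (hmemK0 _).mpr ⟨m, le_trans hm hk, rfl⟩
    · -- touches the boundary
      refine ⟨v R, (hmemK0 _).mpr ⟨R, le_refl _, rfl⟩, ?_, i0, true, ?_⟩
      · intro j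
        rcases eq_or_ne j i0 with hj | hj
        · subst hj; simp [hv]
        · simp [hv, hj]
      · intro hcon
        have hcc := hcon i0
        have hval : (v R + dir i0 true) i0 = (R : ℤ) + 1 := by
          simp [hv, Pi.add_apply, hdir]
        rw [hval, abs_le] at hcc
        omega
    · -- value of the cut
      have hvinj : Set.InjOn v (Finset.range (R+1) : Set ℕ) := by
        intro a _ b _ hab
        have := congrFun hab i0
        simp [hv] at this
        exact_mod_cast this
      have hkey : ∀ k ≤ R, ∀ (i : Fin d) (s : Bool), (v k + dir i s ∈ K0) ↔
          (i = i0 ∧ ((s = true ∧ k < R) ∨ (s = false ∧ 0 < k))) := by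
        intro k hk i s
        constructor
        · intro h
          obtain ⟨m, hm, he⟩ := (hmemK0 _).mp h
          rcases eq_or_ne i i0 with hii | hii
          · refine ⟨hii, ?_⟩
            have hc := congrFun he i0
            cases s with
            | true =>
                simp [hv, Pi.add_apply, hdir, hii] at hc
                exact Or.inl ⟨rfl, by omega⟩
            | false =>
                simp [hv, Pi.add_apply, hdir, hii] at hc
                exact Or.inr ⟨rfl, by omega⟩
          · exfalso
            have hc := congrFun he i
            cases s <;> simp [hv, Pi.add_apply, hdir, hii] at hc
        · rintro ⟨hii, hcase⟩
          rcases hcase with ⟨hs, hkR⟩ | ⟨hs, hk0⟩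
          · subst hs
            refine (hmemK0 _).mpr ⟨k+1, by omega, ?_⟩
            rw [hii]
            exact (hstep k).symm
          · subst hs
            refine (hmemK0 _).mpr ⟨k-1, by omega, ?_⟩
            rw [hii]
            have hst := hstep (k-1)
            rw [show k - 1 + 1 = k from by omega] at hst
            rw [hst]
            funext j
            rcases eq_or_ne j i0 with hj | hj
            · subst hj
              simp [hv, Pi.add_apply, hdir]
            · simp [hv, Pi.add_apply, hdir, hj]
      have hg : ∀ k ∈ Finset.range (R+1),
          ∑ p ∈ Finset.univ.filter (fun p : Fin d × Bool => v k + dir p.1 p.2 ∉ K0), α p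
          = ((if k = R then α (i0, true) else 0) + (if k = 0 then α (i0, false) else 0))
            + ∑ i ∈ Finset.univ.erase i0, (α (i, true) + α (i, false)) := by
        intro k hkr
        rw [Finset.mem_range, Nat.lt_succ_iff] at hkr
        rw [Finset.sum_filter, Fintype.sum_prod_type]
        rw [← Finset.add_sum_erase _ _ (Finset.mem_univ i0)]
        have h1 : (v k + dir i0 true ∉ K0) ↔ k = R := by
          constructor
          · intro h
            by_contra hne
            exact h ((hkey k hkr i0 true).mpr ⟨rfl, Or.inl ⟨rfl, lt_of_le_of_ne hkr hne⟩⟩)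
          · intro hkR hm
            obtain ⟨-, hcase⟩ := (hkey k hkr i0 true).mp hm
            rcases hcase with ⟨-, hlt⟩ | ⟨hs, -⟩
            · omega
            · exact absurd hs (by simp)
        have h2 : (v k + dir i0 false ∉ K0) ↔ k = 0 := by
          constructor
          · intro h
            by_contra hne
            exact h ((hkey k hkr i0 false).mpr ⟨rfl, Or.inr ⟨rfl, Nat.pos_of_ne_zero hne⟩⟩)
          · intro hk0 hm
            obtain ⟨-, hcase⟩ := (hkey k hkr i0 false).mp hm
            rcases hcase with ⟨hs, -⟩ | ⟨-, hlt⟩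
            · exact absurd hs (by simp)
            · omega
        congr 1
        · rw [Fintype.sum_bool]
          simp only [h1, h2]
        · apply Finset.sum_congr rfl
          intro i hi
          have hii : i ≠ i0 := (Finset.mem_erase.mp hi).1
          have hnm : ∀ s : Bool, v k + dir i s ∉ K0 := fun s h => hii ((hkey k hkr i s).mp h).1
          rw [Fintype.sum_bool]
          simp [hnm]
      have hsum : β K0 = ∑ k ∈ Finset.range (R+1),
          ∑ p ∈ Finset.univ.filter (fun p : Fin d × Bool => v k + dir p.1 p.2 ∉ K0), α p := by
        show (∑ x ∈ K0, ∑ p ∈ Finset.univ.filter (fun p : Fin d × Bool => x + dir p.1 p.2 ∉ K0), α p) = _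
        rw [hK0, Finset.sum_image (fun a ha b hb h => hvinj ha hb h)]
      rw [hi0, hsum, Finset.sum_congr rfl hg]
      rw [Finset.sum_add_distrib, Finset.sum_add_distrib, Finset.sum_ite_eq' (Finset.range (R+1)) R,
        Finset.sum_ite_eq' (Finset.range (R+1)) 0, Finset.sum_const, Finset.card_range]
      simp only [Finset.mem_range, Nat.lt_succ_iff, le_refl, if_pos, Nat.zero_le, nsmul_eq_mul]
      rw [hterm]
      push_cast
      ring
  · -- lower bound
    rintro S ⟨K, h0K, hConn, ⟨xb, hxbK, hxbB⟩, rfl⟩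
    obtain ⟨hxbLam, i1, s1, hout⟩ := hxbB
    set t : ℤ := xb i1 with htdef
    have htabs : t = (R : ℤ) ∨ t = -(R : ℤ) := by
      have h1 : |t| ≤ (R : ℤ) := hxbLam i1
      have h2 : ¬ |(xb + dir i1 s1) i1| ≤ (R : ℤ) := by
        intro hcon
        apply hout
        intro j
        rcases eq_or_ne j i1 with rfl | hj
        · exact hcon
        · have : (xb + dir i1 s1) j = xb j := by
            simp [Pi.add_apply, hdir, hj]
          rw [this]; exact hxbLam j
      have h3 : (xb + dir i1 s1) i1 = t + (if s1 then 1 else -1) := by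
        simp [Pi.add_apply, hdir, htdef]
      rw [h3] at h2
      rw [abs_le] at h1
      rw [abs_le, not_and_or, not_le, not_le] at h2
      cases s1 <;> simp at h2 <;> omega
    -- every value between 0 and t is attained as a coordinate of a point of K
    have hIcc : ∀ m : ℤ, min 0 t ≤ m → m ≤ max 0 t → m ∈ K.image (fun x => x i1) := by
      obtain ⟨l, hchain, hhead, hlastl, hmem⟩ := hConn xb hxbK
      intro m hm1 hm2
      have hchain' : (l.map (fun x => x i1)).Chain' (fun u v => u - 1 ≤ v ∧ v ≤ u + 1) := by
        unfold List.Chain'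
        rw [List.isChain_map]
        refine hchain.imp ?_
        rintro x y ⟨i, s, rfl⟩
        have hco : (x + dir i s) i1 = x i1 + (if i1 = i then (if s then 1 else -1) else 0) := by
          simp [Pi.add_apply, hdir]
        rw [hco]
        split_ifs <;> omega
      have hm' := ivt (l.map (fun x => x i1)) 0 t hchain'
        (by rw [List.head?_map, hhead]; rfl)
        (by rw [List.getLast?_map, hlastl]; rfl)
        m (by rcases le_total 0 t with h | h <;>
              [skip; skip] <;> simp [min_eq_left, min_eq_right, max_eq_left, max_eq_right, h] at hm1 hm2 <;> omega)
      obtain ⟨y, hyl, hy⟩ := List.mem_map.mp hm'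
      exact Finset.mem_image.mpr ⟨y, hmem y hyl, hy⟩
    have hN1 : ∀ i : Fin d, 1 ≤ (K.image fun x => Function.update x i 0).card := by
      intro i
      rw [Nat.one_le_iff_ne_zero, ← Nat.pos_iff_ne_zero, Finset.card_pos]
      exact Finset.Nonempty.image ⟨0, h0K⟩ _
    have hNR : ∀ i : Fin d, i ≠ i1 → (R + 1 : ℕ) ≤ (K.image fun x => Function.update x i 0).card := by
      intro i hi
      have h1 : Finset.Icc (min 0 t) (max 0 t) ⊆ K.image (fun x => x i1) := by
        intro m hm
        rw [Finset.mem_Icc] at hm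
        exact hIcc m hm.1 hm.2
      have h2 : (Finset.Icc (min 0 t) (max 0 t)).card = R + 1 := by
        rw [Int.card_Icc]
        rcases htabs with h | h <;> rcases le_total 0 t with h' | h' <;> omega
      have h3 : K.image (fun x => x i1) = (K.image fun x => Function.update x i 0).image (fun y => y i1) := by
        rw [Finset.image_image]
        apply Finset.image_congr
        intro x _
        simp only [Function.comp_apply]
        rw [Function.update_of_ne (Ne.symm hi)]
      calc (R + 1 : ℕ) = (Finset.Icc (min 0 t) (max 0 t)).card := h2.symm
        _ ≤ (K.image (fun x => x i1)).card := Finset.card_le_card h1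
        _ = ((K.image fun x => Function.update x i 0).image (fun y => y i1)).card := by rw [h3]
        _ ≤ (K.image fun x => Function.update x i 0).card := Finset.card_image_le
    have hβ : β K = ∑ p : Fin d × Bool,
        α p * ((K.filter fun x => x + dir p.1 p.2 ∉ K).card : ℝ) := by
      show (∑ x ∈ K, ∑ p ∈ Finset.univ.filter (fun p : Fin d × Bool => x + dir p.1 p.2 ∉ K), α p) = _
      rw [show (∑ x ∈ K, ∑ p ∈ Finset.univ.filter (fun p : Fin d × Bool => x + dir p.1 p.2 ∉ K), α p)
          = ∑ x ∈ K, ∑ p : Fin d × Bool, if x + dir p.1 p.2 ∉ K then α p else 0 from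
        Finset.sum_congr rfl (fun x _ => (Finset.sum_filter _ _))]
      rw [Finset.sum_comm]
      apply Finset.sum_congr rfl
      intro p _
      rw [← Finset.sum_filter, Finset.sum_const, nsmul_eq_mul, mul_comm]
    have hterm_eq : term i1 = ∑ p : Fin d × Bool,
        α p * (if p.1 = i1 then (1:ℝ) else (R + 1 : ℝ)) := by
      have hstep1 : (∑ p : Fin d × Bool, α p * (if p.1 = i1 then (1:ℝ) else (R + 1 : ℝ)))
          = ∑ i : Fin d, ((α (i, true) + α (i, false)) * (if i = i1 then (1:ℝ) else (R + 1 : ℝ))) := by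
        rw [Fintype.sum_prod_type]
        apply Finset.sum_congr rfl
        intro i _
        rw [Fintype.sum_bool]
        simp only []
        ring
      rw [hstep1, ← Finset.add_sum_erase _ _ (Finset.mem_univ i1)]
      have h2 : ∀ i ∈ Finset.univ.erase i1,
          ((α (i, true) + α (i, false)) * (if i = i1 then (1:ℝ) else (R + 1 : ℝ)))
          = (R + 1 : ℝ) * (α (i, true) + α (i, false)) := by
        intro i hi
        rw [if_neg (Finset.mem_erase.mp hi).1]
        ring
      rw [Finset.sum_congr rfl h2, ← Finset.mul_sum, if_pos rfl, mul_one, hterm]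
    have hlow : term i1 ≤ β K := by
      rw [hβ, hterm_eq]
      apply Finset.sum_le_sum
      intro p _
      apply mul_le_mul_of_nonneg_left _ (le_of_lt (hα p))
      have hcut := cut_card K p.1 p.2
      rcases eq_or_ne p.1 i1 with h | h
      · rw [if_pos h]
        have : (1 : ℕ) ≤ (K.filter fun x => x + dir p.1 p.2 ∉ K).card :=
          le_trans (hN1 p.1) hcut
        exact_mod_cast this
      · rw [if_neg h]
        have : (R + 1 : ℕ) ≤ (K.filter fun x => x + dir p.1 p.2 ∉ K).card :=
          le_trans (hNR p.1 h) hcut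
        exact_mod_cast this
    exact le_trans (Finset.inf'_le _ (Finset.mem_univ i1)) hlow
end

section
/- In the directed graph $\mathbb{Z}^d$ with nearest-neighbor edges, assign to each edge $(x, x+e_i)$ the weight $\alpha_i > 0$ ($i = 1,\dots,2d$, $e_{j+d} = -e_j$). For a fixed vertex $x$, among all strongly connected finite edge-subsets $A$ with $x \in \underline{A}$, the minimum of $\beta_A = \sum_{e \in \partial_+\underline{A}} \alpha_e$ equals $\kappa = 2\sum_{i=1}^{2d}\alpha_i - \max_{i=1,\dots,d}(\alpha_i + \alpha_{i+d})$, attained by $A = \{(x, x+e_{i_0}), (x+e_{i_0}, x)\}$ for $i_0$ maximizing $\alpha_{i_0} + \alpha_{i_0+d}$. -/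
open Finset

namespace Stmt16

variable {d : ℕ}

def dir (i : Fin d) (s : Bool) : Fin d → ℤ := fun j => if j = i then (if s then 1 else -1) else 0

lemma dir_self (i : Fin d) (s : Bool) : dir i s i = if s then 1 else -1 := by simp [dir]

lemma dir_ne (i i' : Fin d) (s : Bool) (h : i' ≠ i) : dir i s i' = 0 := by simp [dir, h]

lemma dir_self_ne_zero (i : Fin d) (s : Bool) : dir i s i ≠ 0 := by
  rw [dir_self]; cases s <;> simp

lemma dir_inj {i i' : Fin d} {s s' : Bool} (h : dir i s = dir i' s') : i = i' ∧ s = s' := by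
  have hi : i = i' := by
    by_contra hne
    have := congrFun h i
    rw [dir_self, dir_ne i' i s' hne] at this
    cases s <;> simp_all
  subst hi
  have := congrFun h i
  rw [dir_self, dir_self] at this
  cases s <;> cases s' <;> simp_all

lemma add_dir_ne (x : Fin d → ℤ) (i : Fin d) (s : Bool) : x + dir i s ≠ x := by
  intro h
  have := congrFun h i
  simp only [Pi.add_apply] at this
  exact dir_self_ne_zero i s (by linarith)

lemma dir_true_add_false (x : Fin d → ℤ) (i : Fin d) : (x + dir i true) + dir i false = x := by
  funext j
  simp only [Pi.add_apply, dir]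
  by_cases h : j = i <;> simp [h]

def proj (i : Fin d) (y : Fin d → ℤ) : Fin d → ℤ := Function.update y i 0

lemma proj_add_dir (i : Fin d) (s : Bool) (y : Fin d → ℤ) :
    proj i (y + dir i s) = proj i y := by
  funext j
  by_cases h : j = i
  · subst h; simp [proj]
  · simp [proj, Function.update_of_ne h, dir_ne i j s h]

/-- counting lemma: the number of `+dir i s`-boundary points of `K` is at least the
number of lines in direction `i` meeting `K`. -/
lemma count_ge (K : Finset (Fin d → ℤ)) (i : Fin d) (s : Bool) :
    (K.image (proj i)).card ≤ (K.filter (fun y => y + dir i s ∉ K)).card := by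
  classical
  apply Finset.card_le_card_of_surjOn (proj i)
  intro z hz
  simp only [Finset.coe_image, Set.mem_image, Finset.mem_coe] at hz ⊢
  obtain ⟨y0, hy0, rfl⟩ := hz
  have hne : (K.filter (fun y => proj i y = proj i y0)).Nonempty := ⟨y0, by simp [hy0]⟩
  obtain ⟨y, hy, hmax⟩ := Finset.exists_max_image _ (fun y => if s then y i else -(y i)) hne
  rw [Finset.mem_filter] at hy
  refine ⟨y, Finset.mem_filter.mpr ⟨hy.1, ?_⟩, hy.2⟩
  intro hmem
  have hproj : proj i (y + dir i s) = proj i y0 := by rw [proj_add_dir, hy.2]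
  have hle := hmax _ (Finset.mem_filter.mpr ⟨hmem, hproj⟩)
  simp only [Pi.add_apply, dir_self] at hle
  cases s <;> simp at hle

lemma exists_istar (hd : 0 < d) (K : Finset (Fin d → ℤ)) (hK : 2 ≤ K.card) :
    ∃ istar : Fin d, ∀ i, i ≠ istar → 2 ≤ (K.image (proj i)).card := by
  classical
  by_cases hall : ∀ i : Fin d, 2 ≤ (K.image (proj i)).card
  · exact ⟨⟨0, hd⟩, fun i _ => hall i⟩
  · push_neg at hall
    obtain ⟨istar, hstar⟩ := hall
    refine ⟨istar, fun i hi => ?_⟩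
    by_contra hlt
    push_neg at hlt
    obtain ⟨a, ha, b, hb, hab⟩ := Finset.one_lt_card.mp hK
    have h1 : proj istar a = proj istar b :=
      Finset.card_le_one.mp (by omega) _ (Finset.mem_image_of_mem _ ha) _
        (Finset.mem_image_of_mem _ hb)
    have h2 : proj i a = proj i b :=
      Finset.card_le_one.mp (by omega) _ (Finset.mem_image_of_mem _ ha) _
        (Finset.mem_image_of_mem _ hb)
    apply hab
    funext k
    by_cases hk : k = i
    · subst hk
      have := congrFun h1 k
      simpa [proj, Function.update_of_ne hi] using this
    · have := congrFun h2 k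
      simpa [proj, Function.update_of_ne hk] using this

lemma image_nonempty_card (K : Finset (Fin d → ℤ)) (hK : K.Nonempty) (i : Fin d) :
    1 ≤ (K.image (proj i)).card :=
  Finset.card_pos.mpr (hK.image _)

lemma beta_eq_sum (α : Fin d × Bool → ℝ) (K : Finset (Fin d → ℤ)) :
    (∑ y ∈ K, ∑ p ∈ Finset.univ.filter
        (fun p : Fin d × Bool => y + dir p.1 p.2 ∉ K), α p)
      = ∑ p : Fin d × Bool, ((K.filter (fun y => y + dir p.1 p.2 ∉ K)).card : ℝ) * α p := by
  classical
  simp only [Finset.sum_filter]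
  rw [Finset.sum_comm]
  refine Finset.sum_congr rfl fun p _ => ?_
  rw [← Finset.sum_filter, Finset.sum_const, nsmul_eq_mul]


lemma lower_bound (hd : 0 < d) (α : Fin d × Bool → ℝ) (hα : ∀ p, 0 < α p)
    (K : Finset (Fin d → ℤ)) (hK : 2 ≤ K.card) :
    2 * (∑ p : Fin d × Bool, α p) -
      (Finset.univ.sup' (Finset.univ_nonempty_iff.mpr ⟨⟨0, hd⟩⟩)
        fun i : Fin d => α (i, true) + α (i, false))
      ≤ ∑ y ∈ K, ∑ p ∈ Finset.univ.filter
          (fun p : Fin d × Bool => y + dir p.1 p.2 ∉ K), α p := by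
  classical
  rw [beta_eq_sum]
  obtain ⟨istar, histar⟩ := exists_istar hd K hK
  have hKne : K.Nonempty := Finset.card_pos.mp (by omega)
  have hstep : ∀ p : Fin d × Bool,
      (if p.1 = istar then (1:ℝ) else 2) * α p
        ≤ ((K.filter (fun y => y + dir p.1 p.2 ∉ K)).card : ℝ) * α p := by
    intro p
    apply mul_le_mul_of_nonneg_right _ (hα p).le
    by_cases h : p.1 = istar
    · rw [if_pos h]
      have := le_trans (image_nonempty_card K hKne p.1) (count_ge K p.1 p.2)
      exact_mod_cast this
    · rw [if_neg h]
      have := le_trans (histar p.1 h) (count_ge K p.1 p.2)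
      exact_mod_cast this
  calc 2 * (∑ p : Fin d × Bool, α p) -
        (Finset.univ.sup' (Finset.univ_nonempty_iff.mpr ⟨⟨0, hd⟩⟩)
          fun i : Fin d => α (i, true) + α (i, false))
      ≤ 2 * (∑ p : Fin d × Bool, α p) - (α (istar, true) + α (istar, false)) := by
        have : α (istar, true) + α (istar, false) ≤
            Finset.univ.sup' (Finset.univ_nonempty_iff.mpr ⟨⟨0, hd⟩⟩)
              (fun i : Fin d => α (i, true) + α (i, false)) :=
          Finset.le_sup' (f := fun i : Fin d => α (i, true) + α (i, false)) (Finset.mem_univ istar)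
        linarith
    _ = ∑ p : Fin d × Bool, (if p.1 = istar then (1:ℝ) else 2) * α p := by
        have h1 : ∑ p : Fin d × Bool, (if p.1 = istar then (1:ℝ) else 2) * α p
            = ∑ p : Fin d × Bool, (2 * α p - if p.1 = istar then α p else 0) := by
          refine Finset.sum_congr rfl fun p _ => ?_
          set_option linter.unnecessarySeqFocus false in
          by_cases h : p.1 = istar <;> simp [h] <;> ring
        have h2 : ∑ p : Fin d × Bool, (if p.1 = istar then α p else 0)
            = α (istar, true) + α (istar, false) := by
          rw [Fintype.sum_prod_type]
          have : ∀ i : Fin d, (∑ s : Bool, if i = istar then α (i, s) else 0)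
              = if i = istar then α (i, true) + α (i, false) else 0 := by
            intro i; by_cases h : i = istar <;> simp [h, Fintype.sum_bool]
          simp_rw [this]
          rw [Finset.sum_ite_eq' Finset.univ istar
            (fun i => α (i, true) + α (i, false))]
          simp
        rw [h1, Finset.sum_sub_distrib, h2, ← Finset.mul_sum]
    _ ≤ _ := Finset.sum_le_sum fun p _ => hstep p


lemma dir_eq_iff {i i' : Fin d} {s s' : Bool} : dir i s = dir i' s' ↔ i = i' ∧ s = s' :=
  ⟨dir_inj, by rintro ⟨rfl, rfl⟩; rfl⟩

lemma beta_pair (hd : 0 < d) (α : Fin d × Bool → ℝ) (x : Fin d → ℤ) (i0 : Fin d)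
    (hmax : ∀ i : Fin d, α (i, true) + α (i, false) ≤ α (i0, true) + α (i0, false)) :
    (∑ y ∈ (({(x, x + dir i0 true), (x + dir i0 true, x)} :
          Finset ((Fin d → ℤ) × (Fin d → ℤ)))).image Prod.fst,
        ∑ p ∈ Finset.univ.filter (fun p : Fin d × Bool =>
          y + dir p.1 p.2 ∉ (({(x, x + dir i0 true), (x + dir i0 true, x)} :
            Finset ((Fin d → ℤ) × (Fin d → ℤ)))).image Prod.fst), α p)
      = 2 * (∑ p : Fin d × Bool, α p) -
        (Finset.univ.sup' (Finset.univ_nonempty_iff.mpr ⟨⟨0, hd⟩⟩)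
          fun i : Fin d => α (i, true) + α (i, false)) := by
  classical
  set y : Fin d → ℤ := x + dir i0 true with hy
  have hxy : x ≠ y := fun h => add_dir_ne x i0 true h.symm
  have himg : (({(x, y), (y, x)} :
      Finset ((Fin d → ℤ) × (Fin d → ℤ)))).image Prod.fst = {x, y} := by
    simp [Finset.image_insert]
  rw [himg]
  have hsup : (Finset.univ.sup' (Finset.univ_nonempty_iff.mpr ⟨⟨0, hd⟩⟩)
      fun i : Fin d => α (i, true) + α (i, false)) = α (i0, true) + α (i0, false) := by
    refine le_antisymm (Finset.sup'_le _ _ fun i _ => hmax i) ?_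
    exact Finset.le_sup' (f := fun i : Fin d => α (i, true) + α (i, false)) (Finset.mem_univ i0)
  have hmemx : ∀ p : Fin d × Bool, (x + dir p.1 p.2 ∈ ({x, y} : Finset (Fin d → ℤ)))
      ↔ p = (i0, true) := by
    intro p
    simp only [Finset.mem_insert, Finset.mem_singleton]
    constructor
    · rintro (h | h)
      · exact absurd h (add_dir_ne x p.1 p.2)
      · rw [hy, add_right_inj] at h
        obtain ⟨h1, h2⟩ := dir_inj h
        exact Prod.ext h1 h2
    · rintro rfl; right; rfl
  have hmemy : ∀ p : Fin d × Bool, (y + dir p.1 p.2 ∈ ({x, y} : Finset (Fin d → ℤ)))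
      ↔ p = (i0, false) := by
    intro p
    simp only [Finset.mem_insert, Finset.mem_singleton]
    constructor
    · rintro (h | h)
      · have h2 : y + dir p.1 p.2 = y + dir i0 false := by
          rw [h]; exact (dir_true_add_false x i0).symm
        rw [add_right_inj] at h2
        have := h2
        obtain ⟨h1, h2⟩ := dir_inj this
        exact Prod.ext h1 h2
      · exact absurd h (add_dir_ne y p.1 p.2)
    · rintro rfl; left; exact dir_true_add_false x i0
  have hfx : Finset.univ.filter (fun p : Fin d × Bool =>
      x + dir p.1 p.2 ∉ ({x, y} : Finset (Fin d → ℤ))) = Finset.univ.erase (i0, true) := by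
    ext p
    simp only [Finset.mem_filter, Finset.mem_univ, true_and, Finset.mem_erase, and_true,
      hmemx p]
  have hfy : Finset.univ.filter (fun p : Fin d × Bool =>
      y + dir p.1 p.2 ∉ ({x, y} : Finset (Fin d → ℤ))) = Finset.univ.erase (i0, false) := by
    ext p
    simp only [Finset.mem_filter, Finset.mem_univ, true_and, Finset.mem_erase, and_true,
      hmemy p]
  rw [Finset.sum_insert (by simpa using hxy), Finset.sum_singleton, hfx, hfy,
    Finset.sum_erase_eq_sub (Finset.mem_univ _), Finset.sum_erase_eq_sub (Finset.mem_univ _),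
    hsup]
  ring

end Stmt16

open Finset

/-- In `ℤ^d` with edge weights `α_i` on edges in direction `±e_i`, the minimum of
`β_A = ∑_{e ∈ ∂₊(underline A)} α_e` over strongly connected finite edge-sets `A` with
`x ∈ underline A` equals `κ = 2∑α_i - max_{i}(α_i + α_{i+d})`, attained by the two-edge
set `{(x, x+e_{i₀}), (x+e_{i₀}, x)}` for any `i₀` maximizing `α_{i₀} + α_{i₀+d}`. -/
theorem stmt16 (d : ℕ) (hd : 0 < d) (α : Fin d × Bool → ℝ) (hα : ∀ p, 0 < α p)
    (x : Fin d → ℤ) :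
    letI V := Fin d → ℤ
    let dir : Fin d → Bool → V := fun i s => fun j => if j = i then (if s then 1 else -1) else 0
    -- the set of lattice edges
    let isEdge : V × V → Prop := fun e => ∃ i s, e.2 = e.1 + dir i s
    -- tails and heads of an edge set
    let verts : Finset (V × V) → Finset V := fun A => A.image Prod.fst ∪ A.image Prod.snd
    -- weight of the directed edges exiting the set of tails of `A`
    let β : Finset (V × V) → ℝ := fun A =>
      ∑ y ∈ A.image Prod.fst,
        ∑ p ∈ Finset.univ.filter
          (fun p : Fin d × Bool => y + dir p.1 p.2 ∉ A.image Prod.fst), α p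
    -- strong connectedness: every ordered pair of vertices of `A` is joined by a
    -- directed path of edges of `A`
    let SConn : Finset (V × V) → Prop := fun A => ∀ u ∈ verts A, ∀ v ∈ verts A,
      ∃ l : List (V × V), l ≠ [] ∧ (∀ e ∈ l, e ∈ A) ∧
        l.Chain' (fun e f => e.2 = f.1) ∧
        (l.head?.map Prod.fst = some u) ∧ (l.getLast?.map Prod.snd = some v)
    let κ : ℝ := 2 * (∑ p : Fin d × Bool, α p) -
      (Finset.univ.sup' (Finset.univ_nonempty_iff.mpr ⟨⟨0, hd⟩⟩)
        fun i : Fin d => α (i, true) + α (i, false))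
    IsLeast {S : ℝ | ∃ A : Finset (V × V), (∀ e ∈ A, isEdge e) ∧ SConn A ∧
        x ∈ A.image Prod.fst ∧ S = β A} κ ∧
      ∀ i0 : Fin d, (∀ i : Fin d, α (i, true) + α (i, false) ≤ α (i0, true) + α (i0, false)) →
        β {(x, x + dir i0 true), (x + dir i0 true, x)} = κ := by
  classical
  intro dir' isEdge verts β SConn κ
  have key : ∀ i0 : Fin d,
      (∀ i : Fin d, α (i, true) + α (i, false) ≤ α (i0, true) + α (i0, false)) →
      β {(x, x + dir' i0 true), (x + dir' i0 true, x)} = κ := by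
    intro i0 h
    exact Stmt16.beta_pair hd α x i0 h
  refine ⟨⟨?_, ?_⟩, key⟩
  · -- membership: witness is the two-edge set for a maximizing i0
    obtain ⟨i0, -, hmax⟩ := Finset.exists_max_image Finset.univ
      (fun i : Fin d => α (i, true) + α (i, false)) ⟨⟨0, hd⟩, Finset.mem_univ _⟩
    have hmax' : ∀ i : Fin d, α (i, true) + α (i, false) ≤ α (i0, true) + α (i0, false) :=
      fun i => hmax i (Finset.mem_univ i)
    set y : Fin d → ℤ := x + dir' i0 true with hy
    have hxy : x ≠ y := fun h => Stmt16.add_dir_ne x i0 true h.symm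
    refine ⟨{(x, y), (y, x)}, ?_, ?_, ?_, ?_⟩
    · intro e he
      simp only [Finset.mem_insert, Finset.mem_singleton] at he
      rcases he with rfl | rfl
      · exact ⟨i0, true, rfl⟩
      · exact ⟨i0, false, (Stmt16.dir_true_add_false x i0).symm⟩
    · have hv : ∀ u ∈ verts {(x, y), (y, x)}, u = x ∨ u = y := by
        intro u hu
        simp only [verts, Finset.mem_union, Finset.mem_image, Finset.mem_insert,
          Finset.mem_singleton] at hu
        rcases hu with ⟨e, (rfl | rfl), rfl⟩ | ⟨e, (rfl | rfl), rfl⟩ <;> simp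
      intro u hu v hv'
      rcases hv u hu with h1 | h1 <;> rcases hv v hv' with h2 | h2
      · exact ⟨[(x, y), (y, x)], by simp, by simp, by simp [List.Chain'], by simp [h1],
          by simp [List.getLast?, h2]⟩
      · exact ⟨[(x, y)], by simp, by simp, by simp [List.Chain'], by simp [h1],
          by simp [List.getLast?, h2]⟩
      · exact ⟨[(y, x)], by simp, by simp, by simp [List.Chain'], by simp [h1],
          by simp [List.getLast?, h2]⟩
      · exact ⟨[(y, x), (x, y)], by simp, by simp, by simp [List.Chain'], by simp [h1],
          by simp [List.getLast?, h2]⟩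
    · exact Finset.mem_image.mpr ⟨(x, y), by simp, rfl⟩
    · exact (key i0 hmax').symm
  · rintro S ⟨A, hEdge, hConn, hx, rfl⟩
    have hK2 : 2 ≤ (A.image Prod.fst).card := by
      obtain ⟨e, heA, hex⟩ := Finset.mem_image.mp hx
      obtain ⟨i, s, h2⟩ := hEdge e heA
      have hz : e.2 ∈ verts A := Finset.mem_union_right _ (Finset.mem_image_of_mem _ heA)
      have hxv : x ∈ verts A := Finset.mem_union_left _ hx
      obtain ⟨l, hlne, hlA, -, hhead, -⟩ := hConn e.2 hz x hxv
      match l, hlne with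
      | e0 :: t, _ =>
        simp only [List.head?_cons, Option.map_some] at hhead
        have he0 : e0 ∈ A := hlA e0 List.mem_cons_self
        have hz2 : e.2 ∈ A.image Prod.fst := by
          rw [← Option.some_inj.mp hhead]
          exact Finset.mem_image_of_mem _ he0
        refine Finset.one_lt_card.mpr ⟨x, hx, e.2, hz2, ?_⟩
        rw [h2, hex]
        exact fun h => Stmt16.add_dir_ne x i s h.symm
    exact Stmt16.lower_bound hd α hα _ hK2
end
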